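/- Every 2^ω-OK point of a T1 space is a 2^ω-soso point, and every 2^ω-soso point of a T1 space is a weak P-point. -/
import Mathlib


/-- A sequence of neighbourhoods of `p` is `κ`-OK. -/
def IsOKSeq {Y : Type*} [TopologicalSpace Y] (κ : Cardinal.{0}) (p : Y) (U : ℕ → Set Y) : Prop :=
  ∃ V : Ordinal.{0} → Set Y, (∀ α < κ.ord, V α ∈ nhds p) ∧
    ∀ n : ℕ, 1 ≤ n → ∀ s : Fin n → Ordinal, StrictMono s → (∀ i, s i < κ.ord) →
      (⋂ i, V (s i)) ⊆ U n

/-- `p` is a `κ`-OK point iff every `ω`-sequence of neighbourhoods of `p` is `κ`-OK. -/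
def IsOKPoint {Y : Type*} [TopologicalSpace Y] (κ : Cardinal.{0}) (p : Y) : Prop :=
  ∀ U : ℕ → Set Y, (∀ n, U n ∈ nhds p) → IsOKSeq κ p U

/-- `p` is `2^ω`-soso iff for every countable family `W` of neighbourhoods of `p` there is a
`2^ω`-OK sequence `(U n : n < ω)` of neighbourhoods of `p` with `W ⊆ {U n : n < ω}`. -/
def IsSosoPoint {Y : Type*} [TopologicalSpace Y] (p : Y) : Prop :=
  ∀ W : Set (Set Y), W.Countable → (∀ A ∈ W, A ∈ nhds p) →
    ∃ U : ℕ → Set Y, (∀ n, U n ∈ nhds p) ∧ IsOKSeq Cardinal.continuum.{0} p U ∧ W ⊆ Set.range U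

/-- `p` is a weak P-point iff `p` is not in the closure of any countable subset of `Y \ {p}`. -/
def IsWeakPPoint {Y : Type*} [TopologicalSpace Y] (p : Y) : Prop :=
  ∀ D : Set Y, D.Countable → p ∉ D → p ∉ closure D

theorem stmt2 {Y : Type*} [TopologicalSpace Y] [T1Space Y] (p : Y) :
    (IsOKPoint Cardinal.continuum.{0} p → IsSosoPoint p) ∧
    (IsSosoPoint p → IsWeakPPoint p) := by
  constructor
  · -- OK point → soso point
    intro hOK W hWc hWn
    rcases W.eq_empty_or_nonempty with h | h
    · refine ⟨fun _ => Set.univ, fun _ => Filter.univ_mem,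
        hOK _ (fun _ => Filter.univ_mem), by simp [h]⟩
    · obtain ⟨f, hf⟩ := hWc.exists_eq_range h
      have hfn : ∀ n, f n ∈ nhds p := fun n => hWn _ (hf ▸ Set.mem_range_self n)
      exact ⟨f, hfn, hOK f hfn, hf ▸ subset_rfl⟩
  · -- soso point → weak P-point
    intro hs D hDc hpD hcl
    set W : Set (Set Y) := (fun d => ({d}ᶜ : Set Y)) '' D with hW
    have hWc : W.Countable := hDc.image _
    have hWn : ∀ A ∈ W, A ∈ nhds p := by
      rintro A ⟨d, hd, rfl⟩
      exact compl_singleton_mem_nhds (fun h => hpD (h ▸ hd))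
    obtain ⟨U, hU, ⟨V, hV, hVU⟩, hWU⟩ := hs W hWc hWn
    -- For each d, the set of indices α < continuum.ord with d ∈ V α
    set A : Y → Set Ordinal.{0} :=
      fun d => {α | α < Cardinal.continuum.ord ∧ d ∈ V α} with hA
    -- if {d}ᶜ = U n with n ≥ 1 then A d is finite
    have hfin : ∀ d ∈ D, U 0 ≠ {d}ᶜ → (A d).Finite := by
      intro d hd h0
      obtain ⟨n, hn⟩ := hWU ⟨d, hd, rfl⟩
      have hn1 : 1 ≤ n := by
        rcases Nat.eq_zero_or_pos n with rfl | h
        · exact absurd hn h0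
        · exact h
      by_contra hinf
      obtain ⟨t, hts, htc⟩ := Set.Infinite.exists_subset_card_eq hinf n
      set s : Fin n → Ordinal := fun i => ((t.orderIsoOfFin htc i : t) : Ordinal) with hs'
      have hsm : StrictMono s := fun i j hij => by
        exact_mod_cast (t.orderIsoOfFin htc).strictMono hij
      have hmem : ∀ i, s i ∈ A d := fun i => hts (t.orderIsoOfFin htc i).2
      have hdU : d ∈ U n := by
        refine hVU n hn1 s hsm (fun i => (hmem i).1) ?_
        exact Set.mem_iInter.2 fun i => (hmem i).2
      rw [hn] at hdU
      exact hdU rfl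
    -- the union of these finite sets is countable
    set S : Set Ordinal.{0} := ⋃ d ∈ {d ∈ D | U 0 ≠ ({d}ᶜ : Set Y)}, A d with hS
    have hSc : S.Countable := by
      refine Set.Countable.biUnion (hDc.mono (Set.sep_subset _ _)) ?_
      rintro d ⟨hd, h0⟩
      exact (hfin d hd h0).countable
    -- find α < continuum.ord with α ∉ S
    have hex : ∃ α < Cardinal.continuum.{0}.ord, α ∉ S := by
      by_contra hco
      push_neg at hco
      have hsub : Set.Iio Cardinal.continuum.{0}.ord ⊆ S := fun α hα => hco α hα
      have : (Set.Iio Cardinal.continuum.{0}.ord).Countable := hSc.mono hsub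
      have hmk : Cardinal.mk (Set.Iio Cardinal.continuum.{0}.ord) ≤ Cardinal.aleph0 :=
        (Cardinal.mk_le_aleph0_iff).2 this
      rw [Ordinal.mk_Iio_ordinal, Cardinal.card_ord] at hmk
      rw [← Cardinal.lift_aleph0.{1,0}] at hmk
      exact absurd (Cardinal.lift_le.1 hmk) (not_le.2 Cardinal.aleph0_lt_continuum)
    obtain ⟨α, hα, hαS⟩ := hex
    -- the neighbourhood V α ∩ U 0 is disjoint from D
    have hN : V α ∩ U 0 ∈ nhds p := Filter.inter_mem (hV α hα) (hU 0)
    obtain ⟨d, ⟨hdV, hdU0⟩, hdD⟩ := (mem_closure_iff_nhds.1 hcl) _ hN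
    by_cases h0 : U 0 = ({d}ᶜ : Set Y)
    · rw [h0] at hdU0; exact hdU0 rfl
    · exact hαS (Set.mem_biUnion ⟨hdD, h0⟩ ⟨hα, hdV⟩)
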